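/- arXiv:2007.05387 — 3 statements merged into one kernel-verified Lean document; each statement's English description precedes it below -/
import Mathlib

section
/- Let ψ : ℝ → ℂ and for each integer k let Z_k = [kπ, (k+1)π]. Suppose: (i) ψ is piecewise affine, i.e. the restriction of ψ to each Z_k agrees with an ℝ-affine map, and ψ is injective on each Z_k; (ii) there are disjoint sets V₊, V₋ ⊆ ℂ such that for every x ∈ ℝ, ψ(x) ∈ V₊ if and only if x ∈ 2πℤ, and ψ(x) ∈ V₋ if and only if x ∈ π + 2πℤ; (iii) whenever x ∈ Z_m, y ∈ Z_n and ψ(x) = ψ(y) with ψ(x) ∉ V₊ ∪ V₋, then ψ(Z_m) = ψ(Z_n) as sets. Then for all x, y ∈ ℝ, ψ(x) = ψ(y) implies cos x = cos y. -/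
open Real

lemma floor_pi_mem (x : ℝ) :
    ((⌊x / π⌋ : ℝ)) * π ≤ x ∧ x ≤ ((⌊x / π⌋ : ℝ) + 1) * π := by
  have hπ := Real.pi_pos
  have h1 : ((⌊x / π⌋ : ℝ)) ≤ x / π := Int.floor_le _
  have h2 : x / π < (⌊x / π⌋ : ℝ) + 1 := Int.lt_floor_add_one _
  have hx : x / π * π = x := div_mul_cancel₀ x hπ.ne'
  constructor <;> nlinarith

/-- Lemma 2.1: if `ψ` is affine and injective on each interval
`Z_k = [kπ, (k+1)π]`, sends exactly the points of `2πℤ` into `V₊` and exactly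
the points of `π + 2πℤ` into `V₋` (with `V₊, V₋` disjoint), and any two
intervals whose images share a non-vertex point have the same image, then
`ψ(x) = ψ(y)` implies `cos x = cos y`. -/
theorem correctly_identifies
    (ψ : ℝ → ℂ) (Vp Vm : Set ℂ)
    (Z : ℤ → Set ℝ)
    (hZ : ∀ k : ℤ, Z k = Set.Icc ((k : ℝ) * π) (((k : ℝ) + 1) * π))
    (haff : ∀ k : ℤ, ∃ a b : ℂ, ∀ x ∈ Z k, ψ x = (x : ℂ) * a + b)
    (hinj : ∀ k : ℤ, Set.InjOn ψ (Z k))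
    (hdisj : Disjoint Vp Vm)
    (hVp : ∀ x : ℝ, ψ x ∈ Vp ↔ ∃ k : ℤ, x = 2 * π * k)
    (hVm : ∀ x : ℝ, ψ x ∈ Vm ↔ ∃ k : ℤ, x = π + 2 * π * k)
    (htree : ∀ (m n : ℤ) (x y : ℝ), x ∈ Z m → y ∈ Z n → ψ x = ψ y →
      ψ x ∉ Vp ∪ Vm → ψ '' Z m = ψ '' Z n) :
    ∀ x y : ℝ, ψ x = ψ y → Real.cos x = Real.cos y := by
  intro x y hxy
  have hπ := Real.pi_pos
  by_cases hxp : ψ x ∈ Vp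
  · obtain ⟨k, hk⟩ := (hVp x).1 hxp
    obtain ⟨l, hl⟩ := (hVp y).1 (hxy ▸ hxp)
    rw [hk, hl, show 2*π*(k:ℝ) = (k:ℝ)*(2*π) by ring,
       show 2*π*(l:ℝ) = (l:ℝ)*(2*π) by ring,
       Real.cos_int_mul_two_pi, Real.cos_int_mul_two_pi]
  by_cases hxm : ψ x ∈ Vm
  · obtain ⟨k, hk⟩ := (hVm x).1 hxm
    obtain ⟨l, hl⟩ := (hVm y).1 (hxy ▸ hxm)
    rw [hk, hl, show π+2*π*(k:ℝ) = π+(k:ℝ)*(2*π) by ring,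
       show π+2*π*(l:ℝ) = π+(l:ℝ)*(2*π) by ring,
       Real.cos_add_int_mul_two_pi, Real.cos_add_int_mul_two_pi]
  · set m := ⌊x / π⌋ with hm
    set n := ⌊y / π⌋ with hn
    have hxZ : x ∈ Z m := by rw [hZ]; exact ⟨(floor_pi_mem x).1, (floor_pi_mem x).2⟩
    have hyZ : y ∈ Z n := by rw [hZ]; exact ⟨(floor_pi_mem y).1, (floor_pi_mem y).2⟩
    have he : ψ '' Z m = ψ '' Z n :=
      htree m n x y hxZ hyZ hxy (by simp [hxp, hxm])
    have key : ∀ (j : ℤ) (u : ℝ), u ∈ Z n → ψ u = ψ ((j:ℝ)*π) →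
        ∃ i : ℤ, u = (i:ℝ)*π ∧ n ≤ i ∧ i ≤ n+1 ∧ i % 2 = j % 2 := by
      intro j u huZ huψ
      rw [hZ] at huZ
      rcases Int.even_or_odd j with ⟨k, hk⟩ | ⟨k, hk⟩
      · have hjp : ψ ((j:ℝ)*π) ∈ Vp := (hVp _).2 ⟨k, by rw [hk]; push_cast; ring⟩
        obtain ⟨k', hk'⟩ := (hVp u).1 (huψ ▸ hjp)
        refine ⟨2*k', by rw [hk']; push_cast; ring, ?_, ?_, by omega⟩
        · have : (n:ℝ) ≤ 2*k' := by rw [hk'] at huZ; nlinarith [huZ.1]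
          exact_mod_cast this
        · have : (2*k':ℝ) ≤ n+1 := by rw [hk'] at huZ; nlinarith [huZ.2]
          exact_mod_cast this
      · have hjm : ψ ((j:ℝ)*π) ∈ Vm := (hVm _).2 ⟨k, by rw [hk]; push_cast; ring⟩
        obtain ⟨k', hk'⟩ := (hVm u).1 (huψ ▸ hjm)
        refine ⟨2*k'+1, by rw [hk']; push_cast; ring, ?_, ?_, by omega⟩
        · have : (n:ℝ) ≤ 2*k'+1 := by rw [hk'] at huZ; nlinarith [huZ.1]
          exact_mod_cast this
        · have : (2*k'+1:ℝ) ≤ n+1 := by rw [hk'] at huZ; nlinarith [huZ.2]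
          exact_mod_cast this
    have hm0 : (m:ℝ)*π ∈ Z m := by rw [hZ]; constructor <;> nlinarith
    have hm1 : ((m:ℝ)+1)*π ∈ Z m := by rw [hZ]; constructor <;> nlinarith
    obtain ⟨u, huZ, huψ⟩ : ψ ((m:ℝ)*π) ∈ ψ '' Z n := he ▸ Set.mem_image_of_mem ψ hm0
    obtain ⟨i₀, hu0, hn0, hn0', hp0⟩ := key m u huZ huψ
    obtain ⟨v, hvZ, hvψ⟩ : ψ (((m:ℝ)+1)*π) ∈ ψ '' Z n := he ▸ Set.mem_image_of_mem ψ hm1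
    obtain ⟨i₁, hv0, hn1, hn1', hp1⟩ := key (m+1) v hvZ (by push_cast; exact hvψ)
    obtain ⟨a, b, hab⟩ := haff m
    obtain ⟨a', b', hab'⟩ := haff n
    have ha0 : a ≠ 0 := by
      intro h
      have heq : (m:ℝ)*π = ((m:ℝ)+1)*π :=
        hinj m hm0 hm1 (by rw [hab _ hm0, hab _ hm1, h]; ring)
      nlinarith
    have e1 : (x:ℂ)*a + b = (y:ℂ)*a' + b' := by
      rw [← hab x hxZ, ← hab' y hyZ, hxy]
    have e2 : (((m:ℝ)*π : ℝ):ℂ)*a + b = (((i₀:ℝ)*π : ℝ):ℂ)*a' + b' := by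
      rw [← hab _ hm0, ← huψ, hab' u huZ, hu0]
    have e3 : ((((m:ℝ)+1)*π : ℝ):ℂ)*a + b = (((i₁:ℝ)*π : ℝ):ℂ)*a' + b' := by
      rw [← hab _ hm1, ← hvψ, hab' v hvZ, hv0]
    push_cast at e2 e3
    have hπC : (π:ℂ) ≠ 0 := Complex.ofReal_ne_zero.2 Real.pi_ne_zero
    have ha : a = ((i₁:ℂ) - (i₀:ℂ))*a' := by
      apply mul_left_cancel₀ hπC
      linear_combination e3 - e2
    have ha'0 : a' ≠ 0 := fun h => ha0 (by rw [ha, h, mul_zero])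
    have hstep : (((m:ℂ)*π - x)*((i₁:ℂ) - (i₀:ℂ)))*a' = ((i₀:ℂ)*π - y)*a' := by
      linear_combination e2 - e1 - ((m:ℂ)*π - (x:ℂ))*ha
    have hkeyC := mul_right_cancel₀ ha'0 hstep
    have hreal : ((m:ℝ)*π - x)*((i₁:ℝ) - (i₀:ℝ)) = (i₀:ℝ)*π - y := by
      exact_mod_cast hkeyC
    rcases (by omega : (i₀ = n ∧ i₁ = n+1) ∨ (i₀ = n+1 ∧ i₁ = n)) with ⟨h0, h1⟩ | ⟨h0, h1⟩
    · obtain ⟨c, hc⟩ : ∃ c : ℤ, n = m + 2*c := ⟨(n-m)/2, by omega⟩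
      have hy : y = x + (c:ℝ)*(2*π) := by
        rw [h0, h1, hc] at hreal; push_cast at hreal; linarith
      rw [hy, Real.cos_add_int_mul_two_pi]
    · obtain ⟨c, hc⟩ : ∃ c : ℤ, m + n + 1 = 2*c := ⟨(m+n+1)/2, by omega⟩
      have hy : y = -x + (c:ℝ)*(2*π) := by
        rw [h0, h1] at hreal
        have : ((m:ℝ) + n + 1) = 2*(c:ℝ) := by exact_mod_cast congrArg (Int.cast : ℤ → ℝ) hc
        push_cast at hreal
        linear_combination hreal + π*this
      rw [hy, Real.cos_add_int_mul_two_pi, Real.cos_neg]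
end

section
/- Let s > 0 and C ≥ 1, and let (x_m)_{m ≥ 0} be a strictly increasing sequence of reals with x₀ = 0 such that for every m ≥ 0: C⁻¹·exp(-s·x_m) ≤ x_{m+1} - x_m ≤ C·exp(-s·x_m). Then x_m → ∞ as m → ∞, and there exists a constant C′ ≥ 1 such that for every m ≥ 1: 1/(C′·m) ≤ x_m - x_{m-1} ≤ C′/m. -/
open Real Filter

set_option maxHeartbeats 1000000

/-- Exponential partitions: if the gaps of a strictly increasing sequence starting
at `0` are comparable to `exp(-s·x_m)`, then `x_m → ∞` and the `m`-th gap is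
comparable to `1/m`. -/
theorem exponential_partition (s : ℝ) (hs : 0 < s) (C : ℝ) (hC : 1 ≤ C)
    (x : ℕ → ℝ) (hmono : StrictMono x) (h0 : x 0 = 0)
    (hgap : ∀ m : ℕ, C⁻¹ * Real.exp (-(s * x m)) ≤ x (m + 1) - x m ∧
      x (m + 1) - x m ≤ C * Real.exp (-(s * x m))) :
    Filter.Tendsto x Filter.atTop Filter.atTop ∧
      ∃ C' : ℝ, 1 ≤ C' ∧ ∀ m : ℕ, 1 ≤ m →
        1 / (C' * m) ≤ x m - x (m - 1) ∧ x m - x (m - 1) ≤ C' / m := by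
  have hCpos : (0:ℝ) < C := lt_of_lt_of_le one_pos hC
  set K : ℝ := s * C * Real.exp (s * C) with hKdef
  have hKpos : 0 < K := by positivity
  have hx0 : ∀ m, 0 ≤ x m := by
    intro m
    rw [← h0]
    exact hmono.monotone (Nat.zero_le m)
  have hy1 : ∀ m, 1 ≤ Real.exp (s * x m) := by
    intro m
    rw [← Real.exp_zero]
    exact Real.exp_le_exp.2 (mul_nonneg hs.le (hx0 m))
  -- main exponential identity
  have hsplit : ∀ n, Real.exp (s * x (n+1))
      = Real.exp (s * x n) * Real.exp (s * (x (n+1) - x n)) := by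
    intro n
    rw [← Real.exp_add]
    ring_nf
  have hinv : ∀ n, Real.exp (s * x n) * Real.exp (-(s * x n)) = 1 := by
    intro n
    rw [← Real.exp_add]
    simp
  -- lower bound: exp (s x m) ≥ 1 + (s/C) m
  have hlow : ∀ m : ℕ, 1 + (s / C) * m ≤ Real.exp (s * x m) := by
    intro m
    induction m with
    | zero => simp [h0]
    | succ n ih =>
      have hg := (hgap n).1
      have e2 : 1 + s * (x (n+1) - x n) ≤ Real.exp (s * (x (n+1) - x n)) := by
        linarith [Real.add_one_le_exp (s * (x (n+1) - x n))]
      have hy := hy1 n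
      have hi := hinv n
      have key : Real.exp (s * x n) + s / C ≤ Real.exp (s * x (n+1)) := by
        rw [hsplit n]
        have h1 : Real.exp (s * x n) * (1 + s * (x (n+1) - x n))
            ≤ Real.exp (s * x n) * Real.exp (s * (x (n+1) - x n)) := by
          exact mul_le_mul_of_nonneg_left e2 (by positivity)
        have h2 : Real.exp (s * x n) + s / C
            ≤ Real.exp (s * x n) * (1 + s * (x (n+1) - x n)) := by
          have h3 : Real.exp (s * x n) * (C⁻¹ * Real.exp (-(s * x n)))
              ≤ Real.exp (s * x n) * (x (n+1) - x n) :=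
            mul_le_mul_of_nonneg_left hg (by positivity)
          have h4 : Real.exp (s * x n) * (C⁻¹ * Real.exp (-(s * x n))) = C⁻¹ := by
            rw [mul_comm C⁻¹, ← mul_assoc, hi]; ring
          rw [h4] at h3
          have : s * C⁻¹ ≤ s * (Real.exp (s * x n) * (x (n+1) - x n)) :=
            mul_le_mul_of_nonneg_left h3 hs.le
          have hsc : s / C = s * C⁻¹ := by ring
          nlinarith
        linarith
      push_cast
      linarith
  -- upper bound: exp (s x m) ≤ 1 + K m
  have hup : ∀ m : ℕ, Real.exp (s * x m) ≤ 1 + K * m := by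
    intro m
    induction m with
    | zero => simp [h0]
    | succ n ih =>
      have hg := (hgap n).2
      have hy := hy1 n
      have hi := hinv n
      have hexppos := Real.exp_pos (s * x n)
      set d : ℝ := x (n+1) - x n with hd
      have hd0 : 0 ≤ d := le_of_lt (sub_pos.2 (hmono (Nat.lt_succ_self n)))
      -- exp(s x n) * d ≤ C
      have hyd : Real.exp (s * x n) * d ≤ C := by
        have h3 : Real.exp (s * x n) * d
            ≤ Real.exp (s * x n) * (C * Real.exp (-(s * x n))) :=
          mul_le_mul_of_nonneg_left hg (by positivity)
        have h4 : Real.exp (s * x n) * (C * Real.exp (-(s * x n))) = C := by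
          rw [mul_comm C, ← mul_assoc, hi]; ring
        linarith [h4 ▸ h3]
      -- d ≤ C
      have hdC : d ≤ C := by
        have hexm1 : Real.exp (-(s * x n)) ≤ 1 := by
          rw [← Real.exp_zero]
          exact Real.exp_le_exp.2 (by nlinarith [hx0 n])
        calc d ≤ C * Real.exp (-(s * x n)) := hg
          _ ≤ C * 1 := by nlinarith
          _ = C := by ring
      -- exp(s d) ≤ 1 + s d exp(s C)
      have hexpd : Real.exp (s * d) ≤ 1 + s * d * Real.exp (s * C) := by
        have h5 : (-(s * d)) + 1 ≤ Real.exp (-(s * d)) := Real.add_one_le_exp _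
        have h6 : Real.exp (s * d) * Real.exp (-(s * d)) = 1 := by
          rw [← Real.exp_add]; simp
        have h7 : Real.exp (s * d) ≤ Real.exp (s * C) :=
          Real.exp_le_exp.2 (by nlinarith)
        have h8 : Real.exp (s * d) * ((-(s * d)) + 1) ≤ Real.exp (s * d) * Real.exp (-(s * d)) :=
          mul_le_mul_of_nonneg_left h5 (Real.exp_pos (s * d)).le
        rw [h6] at h8
        have h9 : s * d * Real.exp (s * d) ≤ s * d * Real.exp (s * C) :=
          mul_le_mul_of_nonneg_left h7 (mul_nonneg hs.le hd0)
        nlinarith [h8, h9]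
      have key : Real.exp (s * x (n+1)) ≤ Real.exp (s * x n) + K := by
        rw [hsplit n, ← hd]
        calc Real.exp (s * x n) * Real.exp (s * d)
            ≤ Real.exp (s * x n) * (1 + s * d * Real.exp (s * C)) :=
              mul_le_mul_of_nonneg_left hexpd (by positivity)
          _ = Real.exp (s * x n) + s * (Real.exp (s * x n) * d) * Real.exp (s * C) := by ring
          _ ≤ Real.exp (s * x n) + s * C * Real.exp (s * C) := by
              nlinarith [Real.exp_pos (s * C)]
          _ = Real.exp (s * x n) + K := by rw [hKdef]
      push_cast
      linarith
  constructor
  · -- tendsto atTop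
    have hflim : Tendsto (fun m : ℕ => Real.log (1 + (s / C) * m) / s) atTop atTop := by
      apply Tendsto.atTop_div_const hs
      apply Real.tendsto_log_atTop.comp
      apply tendsto_atTop_add_const_left
      exact (tendsto_natCast_atTop_atTop).const_mul_atTop (by positivity)
    apply tendsto_atTop_mono _ hflim
    intro m
    have h1 : (0:ℝ) < 1 + (s / C) * m := by positivity
    have h2 : Real.log (1 + (s / C) * m) ≤ s * x m := by
      rw [Real.log_le_iff_le_exp h1]
      exact hlow m
    rw [div_le_iff₀ hs]
    linarith
  · refine ⟨C * (1 + K) + C + C ^ 2 / s, ?_, ?_⟩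
    · nlinarith [mul_pos hCpos hKpos, div_pos (pow_pos hCpos 2) hs]
    · intro m hm
      obtain ⟨n, rfl⟩ : ∃ n, m = n + 1 := ⟨m - 1, (Nat.succ_pred_eq_of_pos hm).symm⟩
      simp only [Nat.add_sub_cancel]
      set C' : ℝ := C * (1 + K) + C + C ^ 2 / s with hC'
      have hC'pos : 0 < C' := by positivity
      have hg := hgap n
      set d : ℝ := x (n+1) - x n with hd
      have hd0 : 0 < d := sub_pos.2 (hmono (Nat.lt_succ_self n))
      have hy := hy1 n
      have hi := hinv n
      have hnpos : (0:ℝ) < (n:ℝ) + 1 := by positivity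
      have hcast : ((n+1 : ℕ):ℝ) = (n:ℝ) + 1 := by push_cast; ring
      have hyd_up : Real.exp (s * x n) * d ≤ C := by
        have h3 : Real.exp (s * x n) * d
            ≤ Real.exp (s * x n) * (C * Real.exp (-(s * x n))) :=
          mul_le_mul_of_nonneg_left hg.2 (by positivity)
        have h4 : Real.exp (s * x n) * (C * Real.exp (-(s * x n))) = C := by
          rw [mul_comm C, ← mul_assoc, hi]; ring
        linarith [h4 ▸ h3]
      have hyd_low : C⁻¹ ≤ Real.exp (s * x n) * d := by
        have h3 : Real.exp (s * x n) * (C⁻¹ * Real.exp (-(s * x n)))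
            ≤ Real.exp (s * x n) * d :=
          mul_le_mul_of_nonneg_left hg.1 (by positivity)
        have h4 : Real.exp (s * x n) * (C⁻¹ * Real.exp (-(s * x n))) = C⁻¹ := by
          rw [mul_comm C⁻¹, ← mul_assoc, hi]; ring
        linarith [h4 ▸ h3]
      have hlo := hlow n
      have hupn := hup n
      constructor
      · -- 1 / (C' * (n+1)) ≤ d
        rw [hcast, div_le_iff₀ (by positivity)]
        -- 1 ≤ d * (C' * (n+1)); from d * exp(s x n) ≥ C⁻¹ and C * exp(s x n) ≤ C(1+Kn) ≤ C'(n+1)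
        have h1 : 1 ≤ d * (C * Real.exp (s * x n)) := by
          have := mul_le_mul_of_nonneg_left hyd_low hCpos.le
          have hCinv : C * C⁻¹ = 1 := mul_inv_cancel₀ (ne_of_gt hCpos)
          nlinarith
        have h2 : C * Real.exp (s * x n) ≤ C' * ((n:ℝ) + 1) := by
          have : C * Real.exp (s * x n) ≤ C * (1 + K * n) :=
            mul_le_mul_of_nonneg_left hupn hCpos.le
          have hC'ge : C * (1 + K) ≤ C' := by
            rw [hC']
            nlinarith [div_pos (pow_pos hCpos 2) hs]
          nlinarith [mul_le_mul_of_nonneg_right hC'ge (Nat.cast_nonneg (α := ℝ) n),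
            mul_nonneg (mul_nonneg hCpos.le hKpos.le) (Nat.cast_nonneg (α := ℝ) n),
            mul_nonneg hCpos.le (Nat.cast_nonneg (α := ℝ) n)]
        nlinarith [mul_le_mul_of_nonneg_left h2 hd0.le]
      · -- d ≤ C' / (n+1)
        rw [hcast, le_div_iff₀ hnpos]
        -- d * (n+1) ≤ C'
        -- from d * exp(s x n) ≤ C and exp(s x n) ≥ 1 + (s/C) n :
        -- d * (1 + (s/C) n) ≤ C so d + d*(s/C)*n ≤ C, d ≤ C, d*n ≤ C^2/s
        have h1 : d * (1 + (s / C) * n) ≤ C := by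
          nlinarith [mul_le_mul_of_nonneg_left hlo hd0.le]
        have hdn0 : 0 ≤ d * (s / C) * (n:ℝ) :=
          mul_nonneg (mul_nonneg hd0.le (div_nonneg hs.le hCpos.le)) (Nat.cast_nonneg n)
        have hdle : d ≤ C := by nlinarith [hdn0, h1]
        have hscn : d * (s / C) * (n:ℝ) ≤ C := by nlinarith [h1]
        have h2 : d * (n:ℝ) * s ≤ C ^ 2 := by
          have h3 : d * (s / C) * (n:ℝ) * C ≤ C * C :=
            mul_le_mul_of_nonneg_right hscn hCpos.le
          have hCC : d * (s / C) * (n:ℝ) * C = d * (n:ℝ) * s := by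
            field_simp
          rw [hCC] at h3
          nlinarith [h3]
        rw [hC']
        have hdns : d * (n:ℝ) ≤ C ^ 2 / s := by
          rw [le_div_iff₀ hs]
          exact h2
        nlinarith [mul_nonneg hCpos.le hKpos.le, hdns, hdle]
end

section
/- Let f, F, σ, τ : ℂ → ℂ. Suppose: (i) F(σ(w)) = τ(f(w)) for all w ∈ ℂ; (ii) there is M > 0 with τ(z) = z whenever |z| > M; (iii) there are C > 0 and R₀ > 0 with |σ(w)| ≤ C·√|w| whenever |w| ≥ R₀; and (iv) |σ(w)| → ∞ as |w| → ∞. Then ρ(F) ≥ 2·ρ(f), where ρ(g) = limsup_{|z|→∞} (log₊ log₊ |g(z)|) / (log₊ |z|) and log₊ r = max(0, log r). -/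
open Filter

/-- `log₊ r = max(0, log r)`. -/
noncomputable def logPlus (r : ℝ) : ℝ := max 0 (Real.log r)

/-- The order of growth `ρ(g) = limsup_{|z|→∞} log₊ log₊ |g(z)| / log₊ |z|`,
taken in the extended reals. -/
noncomputable def growthOrder (g : ℂ → ℂ) : EReal :=
  Filter.limsup
    (fun z => ((logPlus (logPlus (‖g z‖)) / logPlus ‖z‖ : ℝ) : EReal))
    (Filter.comap (fun z : ℂ => ‖z‖) Filter.atTop)

/-!
Where `|f w| > M` we have `F (σ w) = f w`, so the growth ratios `log⁺ log⁺ |g z| / log⁺ |z|`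
of `f` at `w` and of `F` at `σ w` share their numerator, while
`log⁺ |σ w| ≤ log C + ½ log⁺ |w|`; hence
`2 · growthRatio f w ≤ (1 + ε) · growthRatio F (σ w) + ε` for large `w` (where `|f w| ≤ M`,
the ratio of `f` tends to `0`). Taking limsups, and using `σ w → ∞` to compare the limsup
along `σ` with `ρ(F)`, gives `2 ρ(f) ≤ ρ(F)`.
-/

open Bornology Real

theorem limsup_coe_le_limsup_coe_of_eventually_le_one_add_mul {α : Type*} {l : Filter α}
    {u v : α → ℝ} (h : ∀ ε > 0, ∀ᶠ x in l, u x ≤ (1 + ε) * v x + ε) :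
    limsup (fun x => (u x : EReal)) l ≤ limsup (fun x => (v x : EReal)) l := by
  rw [le_limsup_iff]
  intro y hy
  obtain ⟨c', hyc', hc'⟩ := EReal.exists_between_coe_real hy
  obtain ⟨c, hyc, hcc'⟩ := EReal.exists_between_coe_real hyc'
  have hcc' : c < c' := EReal.coe_lt_coe_iff.mp hcc'
  set ε := (c' - c) / (1 + |c|)
  have hε : 0 < ε := div_pos (by linarith) (by positivity)
  -- `ε` is small enough that `(1 + ε) * c + ε ≤ c'`.
  have hεc : ε * (1 + |c|) = c' - c := div_mul_cancel₀ _ (by positivity)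
  refine ((frequently_lt_of_lt_limsup (by isBoundedDefault) hc').and_eventually (h ε hε)).mono ?_
  rintro x ⟨hux, hle⟩
  have hux : c' < u x := EReal.coe_lt_coe_iff.mp hux
  have hcv : c < v x := by nlinarith [le_abs_self c]
  exact hyc.trans (EReal.coe_lt_coe_iff.mpr hcv)

theorem log_le_log_add_half_log_of_le_mul_sqrt {x y C : ℝ} (hx : 0 < x) (hC : 0 < C)
    (h : x ≤ C * √y) : log x ≤ log C + log y / 2 := by
  have hy : 0 < √y := pos_of_mul_pos_right (hx.trans_le h) hC.le
  calc log x ≤ log (C * √y) := log_le_log hx h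
    _ = log C + log y / 2 := by
      rw [log_mul hC.ne' hy.ne', log_sqrt (sqrt_pos.mp hy).le]

theorem tendsto_posLog_norm_cobounded {E : Type*} [SeminormedAddCommGroup E] :
    Tendsto (fun w : E => log⁺ ‖w‖) (cobounded E) atTop :=
  tendsto_atTop_mono (fun _ => le_max_right _ _)
    (tendsto_log_atTop.comp tendsto_norm_cobounded_atTop)

theorem logPlus_eq_posLog : logPlus = log⁺ := rfl

noncomputable def growthRatio (g : ℂ → ℂ) (z : ℂ) : ℝ := log⁺ (log⁺ ‖g z‖) / log⁺ ‖z‖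

theorem growthOrder_eq_limsup_growthRatio (g : ℂ → ℂ) :
    growthOrder g = limsup (fun z => (growthRatio g z : EReal)) (cobounded ℂ) := by
  rw [growthOrder, comap_norm_atTop, logPlus_eq_posLog]
  rfl

theorem growthRatio_nonneg (g : ℂ → ℂ) (z : ℂ) : 0 ≤ growthRatio g z :=
  div_nonneg posLog_nonneg posLog_nonneg

theorem growthRatio_le_of_norm_le {g : ℂ → ℂ} {z : ℂ} {M : ℝ} (h : ‖g z‖ ≤ M) :
    growthRatio g z ≤ log⁺ (log⁺ M) / log⁺ ‖z‖ :=
  div_le_div_of_nonneg_right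
    (posLog_le_posLog posLog_nonneg (posLog_le_posLog (norm_nonneg _) h)) posLog_nonneg

theorem mul_growthRatio_le_mul_growthRatio_comp {f F σ : ℂ → ℂ} {w : ℂ} {a b : ℝ}
    (hFf : F (σ w) = f w) (hw : 0 < log⁺ ‖w‖) (hσw : 0 < log⁺ ‖σ w‖)
    (hab : a * log⁺ ‖σ w‖ ≤ b * log⁺ ‖w‖) :
    a * growthRatio f w ≤ b * growthRatio F (σ w) := by
  have hN : 0 ≤ log⁺ (log⁺ ‖f w‖) := posLog_nonneg
  rw [growthRatio, growthRatio, hFf, mul_div_assoc', mul_div_assoc', div_le_div_iff₀ hw hσw]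
  nlinarith

theorem eventually_two_mul_growthRatio_le {f F σ τ : ℂ → ℂ} {M C R₀ ε : ℝ}
    (heq : ∀ w, F (σ w) = τ (f w)) (hτ : ∀ z : ℂ, M < ‖z‖ → τ z = z) (hC : 0 < C)
    (hσ : ∀ w : ℂ, R₀ ≤ ‖w‖ → ‖σ w‖ ≤ C * √‖w‖)
    (hσtop : Tendsto (fun w => ‖σ w‖) (cobounded ℂ) atTop) (hε : 0 < ε) :
    ∀ᶠ w in cobounded ℂ, 2 * growthRatio f w ≤ (1 + ε) * growthRatio F (σ w) + ε := by
  have hlog := tendsto_posLog_norm_cobounded (E := ℂ)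
  filter_upwards [tendsto_norm_cobounded_atTop.eventually_ge_atTop R₀,
    hσtop.eventually_gt_atTop 1, hlog.eventually_gt_atTop 0,
    (hlog.const_mul_atTop hε).eventually_ge_atTop (2 * log C),
    (hlog.const_mul_atTop hε).eventually_ge_atTop (2 * log⁺ (log⁺ M))]
    with w hwR₀ hσw hw hCw hMw
  have hF := growthRatio_nonneg F (σ w)
  rcases le_or_gt ‖f w‖ M with hfM | hfM
  · have hf := growthRatio_le_of_norm_le hfM
    rw [le_div_iff₀ hw] at hf
    have : 2 * growthRatio f w ≤ ε := le_of_mul_le_mul_right (by linarith) hw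
    nlinarith
  · have hσlog : log⁺ ‖σ w‖ = log ‖σ w‖ := posLog_eq_log (by simpa using hσw.le)
    have hlogw : log ‖w‖ ≤ log⁺ ‖w‖ := le_max_right _ _
    have hσC := log_le_log_add_half_log_of_le_mul_sqrt (by linarith) hC (hσ w hwR₀)
    have hratio := mul_growthRatio_le_mul_growthRatio_comp (a := 2) (b := 1 + ε)
      ((heq w).trans (hτ _ hfM)) hw (hσlog ▸ log_pos hσw) (by linarith)
    linarith

/-- The growth computation of Section 6: if `F ∘ σ = τ ∘ f`, `τ` is the identity
off a compact set, `|σ(w)| = O(√|w|)` and `|σ(w)| → ∞`, then `ρ(F) ≥ 2ρ(f)`. -/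
theorem order_doubles (f F σ τ : ℂ → ℂ)
    (heq : ∀ w : ℂ, F (σ w) = τ (f w))
    (hτ : ∃ M : ℝ, 0 < M ∧ ∀ z : ℂ, M < ‖z‖ → τ z = z)
    (hσ : ∃ C R₀ : ℝ, 0 < C ∧ 0 < R₀ ∧
      ∀ w : ℂ, R₀ ≤ ‖w‖ → ‖σ w‖ ≤ C * Real.sqrt ‖w‖)
    (hσtop : Filter.Tendsto (fun w => ‖σ w‖)
      (Filter.comap (fun z : ℂ => ‖z‖) Filter.atTop) Filter.atTop) :
    2 * growthOrder f ≤ growthOrder F := by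
  obtain ⟨M, -, hτ⟩ := hτ
  obtain ⟨C, R₀, hC, -, hσ⟩ := hσ
  rw [comap_norm_atTop] at hσtop
  rw [growthOrder_eq_limsup_growthRatio, growthOrder_eq_limsup_growthRatio]
  calc 2 * limsup (fun z => (growthRatio f z : EReal)) (cobounded ℂ)
      = limsup (fun z => ((2 * growthRatio f z : ℝ) : EReal)) (cobounded ℂ) := by
        rw [← EReal.limsup_const_mul_of_nonneg_of_ne_top (by norm_num) (by decide)]
        norm_cast
    _ ≤ limsup (fun w => (growthRatio F (σ w) : EReal)) (cobounded ℂ) :=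
        limsup_coe_le_limsup_coe_of_eventually_le_one_add_mul
          fun ε hε => eventually_two_mul_growthRatio_le heq hτ hC hσ hσtop hε
    _ ≤ limsup (fun z => (growthRatio F z : EReal)) (cobounded ℂ) :=
        (tendsto_norm_atTop_iff_cobounded.mp hσtop).limsup_comp_le_limsup
          (u := fun z => (growthRatio F z : EReal))
end
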